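/- arXiv:2404.01484 — 4 statements merged into one kernel-verified Lean document; each statement's English description precedes it below -/
import Mathlib

section
/- The subtyping rule SubHoare is sound for Hoare Automata Type denotations: if L(A₂) ⊆ L(A₁), ⟦t₁⟧ ⊆ ⟦t₂⟧, and L((A₂;Σ*) ∩ B₁) ⊆ L((A₂;Σ*) ∩ B₂), then ⟦[A₁] t₁ ⟨B₁⟩⟧ ⊆ ⟦[A₂] t₂ ⟨B₂⟩⟧. -/
/-- A computation is modeled as a relation: given an input (context) trace,
it may produce an emitted trace and a value. -/
def Comp (E V : Type) := List E → List E → V → Prop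

/-- Denotation of a Hoare Automata Type `[A] t ⟨B⟩`, given the languages of the
pre- and post-condition automata and the denotation of the refinement type `t`. -/
def HAT {E V : Type} (LA : Set (List E)) (T : Set V) (LB : Set (List E)) :
    Set (Comp E V) :=
  { e | ∀ α α' v, α ∈ LA → e α α' v → v ∈ T ∧ α ++ α' ∈ LB }

/-- `L(A;Σ*)`: the set of all traces with a prefix in `L(A)`. -/
def prefixed {E : Type} (LA : Set (List E)) : Set (List E) :=
  { β | ∃ α ∈ LA, ∃ γ, β = α ++ γ }

/-- soundness of the SubHoare subtyping rule. -/
theorem subHoare_sound {E V : Type} (LA₁ LA₂ : Set (List E)) (T₁ T₂ : Set V)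
    (LB₁ LB₂ : Set (List E))
    (hA : LA₂ ⊆ LA₁) (hT : T₁ ⊆ T₂)
    (hB : prefixed LA₂ ∩ LB₁ ⊆ prefixed LA₂ ∩ LB₂) :
    HAT LA₁ T₁ LB₁ ⊆ HAT LA₂ T₂ LB₂ := by
  intro e he α α' v hα hstep
  obtain ⟨hv, hpost⟩ := he α α' v (hA hα) hstep
  refine ⟨hT hv, (hB ⟨⟨α, hα, α', rfl⟩, hpost⟩).2⟩
end

section
/- Soundness of SubIntMerge: the intersection of HATs [A₁] t ⟨B⟩ and [A₂] t ⟨B⟩ is a subtype of [A₁ ∨ A₂] t ⟨B⟩, i.e., ⟦[A₁] t ⟨B⟩⟧ ∩ ⟦[A₂] t ⟨B⟩⟧ ⊆ ⟦[A₁ ∨ A₂] t ⟨B⟩⟧. -/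
/-- soundness of SubIntMerge. -/
theorem subIntMerge_sound {E V : Type} (LA₁ LA₂ : Set (List E)) (T : Set V)
    (LB : Set (List E)) :
    HAT LA₁ T LB ∩ HAT LA₂ T LB ⊆ HAT (LA₁ ∪ LA₂) T LB := by
  rintro e ⟨h1, h2⟩ α α' v hα he
  cases hα with
  | inl h => exact h1 α α' v h he
  | inr h => exact h2 α α' v h he
end

section
/- Sequential composition of effectful steps (essence of TEOpApp soundness): suppose operator op belongs to ⟦[A] t_x ⟨A'⟩⟧ and for every value x ∈ ⟦t_x⟧ the continuation e(x) belongs to ⟦[A'] t ⟨B⟩⟧; if additionally L(A') ⊆ L(A;Σ*) (the postcondition extends the precondition), and the composed computation under context α first runs op producing (α₁, v), then runs e(v) under context α ++ α₁ producing (α₂, w); then whenever α ∈ L(A), the composed result satisfies w ∈ ⟦t⟧ and α ++ α₁ ++ α₂ ∈ L(B). -/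
/-- sequential composition of effectful steps (essence of
TEOpApp soundness). -/
theorem teopapp_sound {E V W : Type} (LA LA' LB : Set (List E))
    (Tx : Set V) (T : Set W)
    (op : Comp E V) (e : V → Comp E W)
    (hop : op ∈ HAT LA Tx LA')
    (he : ∀ x ∈ Tx, e x ∈ HAT LA' T LB)
    (hext : LA' ⊆ prefixed LA)
    (α α₁ α₂ : List E) (v : V) (w : W)
    (hstep₁ : op α α₁ v)
    (hstep₂ : e v (α ++ α₁) α₂ w)
    (hctx : α ∈ LA) :
    w ∈ T ∧ α ++ α₁ ++ α₂ ∈ LB := by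
  obtain ⟨hv, h1⟩ := hop α α₁ v hctx hstep₁
  obtain ⟨hw, h2⟩ := he v hv (α ++ α₁) α₂ w h1 hstep₂
  exact ⟨hw, by simpa [List.append_assoc] using h2⟩
end

section
/- Type soundness for representation invariants (corollary shape): if computation f belongs to ⟦[A] t ⟨A⟩⟧, then for every effect context α ∈ L(A), whenever f steps under α producing trace α' and value v, the extended context α ++ α' is again in L(A) and v ∈ ⟦t⟧. Moreover, such invariant-preserving computations are closed under the sequential composition of the previous lemma: if f, g ∈ ⟦[A] t ⟨A⟩⟧ understood as unit-valued computations, their sequential composition also lies in ⟦[A] t ⟨A⟩⟧. -/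
/-- Sequential composition of computations: 'let x = f in g' emits the
concatenation of the two emitted traces. -/
def seqComp {E V : Type} (f g : Comp E V) : Comp E V :=
  fun α β w => ∃ α₁ v α₂, f α α₁ v ∧ g (α ++ α₁) α₂ w ∧ β = α₁ ++ α₂

/-- type soundness for representation invariants: a computation
in ⟦[A] t ⟨A⟩⟧ preserves the invariant A, and (for unit-valued computations)
invariant-preserving computations are closed under sequential composition. -/
theorem invariant_preservation {E : Type} (LA : Set (List E)) (T : Set Unit) :
    (∀ f : Comp E Unit, f ∈ HAT LA T LA →
      ∀ α ∈ LA, ∀ α' v, f α α' v → α ++ α' ∈ LA ∧ v ∈ T) ∧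
    (∀ f g : Comp E Unit, f ∈ HAT LA T LA → g ∈ HAT LA T LA →
      seqComp f g ∈ HAT LA T LA) := by
  constructor
  · intro f hf α hα α' v hstep
    exact (hf α α' v hα hstep).symm
  · intro f g hf hg α α' v hα hstep
    obtain ⟨α₁, u, α₂, h1, h2, rfl⟩ := hstep
    obtain ⟨_, h1'⟩ := hf α α₁ u hα h1
    obtain ⟨hv, h2'⟩ := hg (α ++ α₁) α₂ v h1' h2
    exact ⟨hv, by simpa [List.append_assoc] using h2'⟩
end
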